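/- arXiv:2012.08718 — 2 statements merged into one kernel-verified Lean document; each statement's English description precedes it below -/
import Mathlib

section
/- Key slope lemma of Appendix A: define h_δ(τ,b) := V_δ(τ, b+k−1) − V_δ(τ, b). Then for all integers τ ≥ 1, b ≥ 0 and all reals δ₁ ≤ δ₂, one has h_{δ₂}(τ,b) − h_{δ₁}(τ,b) ≥ −(δ₂ − δ₁) (i.e. the 'derivative' of h with respect to the subsidy is at least −1). -/
/-!
Write `W τ b = V_{δ₂}(τ, b) - V_{δ₁}(τ, b)` (`subsidyGain`). Every `V_δ(τ + 1, b)` is the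
maximum of a passive value `δ + β V_δ(τ, b - 1)` and an active value `E 𝟙[b ≥ 1] + β V_δ(τ, b - k)`
(for `τ = 0` the continuation values are terminal penalties that do not depend on `δ`), so
`W (τ + 1) b` lies between `δ₂ - δ₁ + β W τ (b - 1)` and `β W τ (b - k)`. By induction on `τ`,
`W τ b' - W τ b ≥ -(δ₂ - δ₁)` for all `b ≤ b'` with `b' - k = b - 1` in truncated subtraction:
this family of pairs contains `(b, b + k - 1)` and is closed under both transitions, and in the
one mixed case the active move from `b'` and the passive move from `b` both lead to `b - 1`.
-/

noncomputable def F (α : ℝ) (x : ℕ) : ℝ := α * (x : ℝ) ^ 2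

noncomputable def V (k : ℕ) (E α β δ : ℝ) : ℕ → ℕ → ℝ
  | 0, _ => 0
  | 1, 0 => max δ 0
  | 1, b + 1 => max (δ - F α b) (E - F α (b + 1 - k))
  | t + 2, b =>
      max (δ + β * V k E α β δ (t + 1) (b - 1))
        ((if 1 ≤ b then E else 0) + β * V k E α β δ (t + 1) (b - k))

noncomputable def g (k : ℕ) (E α β δ : ℝ) : ℕ → ℕ → ℝ
  | 0, _ => 0
  | 1, 0 => δ
  | 1, b + 1 => δ - F α b - E + F α (b + 1 - k)
  | t + 2, b =>
      δ + β * V k E α β δ (t + 1) (b - 1) - (if 1 ≤ b then E else 0)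
        - β * V k E α β δ (t + 1) (b - k)

noncomputable def whittle (k : ℕ) (E α β : ℝ) (τ b : ℕ) : ℝ :=
  sInf {δ : ℝ | 0 ≤ g k E α β δ τ b}

section MaxSub

variable {α : Type*} [AddCommGroup α] [LinearOrder α] [IsOrderedAddMonoid α]

theorem min_sub_le_max_sub_max (a b c d : α) : min (a - c) (b - d) ≤ max a b - max c d := by
  grind

theorem max_sub_max_mem_uIcc (a b c d : α) : max a b - max c d ∈ Set.uIcc (a - c) (b - d) :=
  ⟨min_sub_le_max_sub_max a b c d, max_sub_max_le_max a b c d⟩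

theorem le_sub_of_mem_uIcc {x y u v s t c : α} (hs : s ∈ Set.uIcc x y) (ht : t ∈ Set.uIcc u v)
    (hxu : c ≤ x - u) (hxv : c ≤ x - v) (hyu : c ≤ y - u) (hyv : c ≤ y - v) : c ≤ s - t := by
  rw [Set.mem_uIcc] at hs ht
  rcases hs with ⟨hxs, -⟩ | ⟨hys, -⟩ <;> rcases ht with ⟨-, htv⟩ | ⟨-, htu⟩
  · exact hxv.trans (sub_le_sub hxs htv)
  · exact hxu.trans (sub_le_sub hxs htu)
  · exact hyv.trans (sub_le_sub hys htv)
  · exact hyu.trans (sub_le_sub hys htu)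

end MaxSub

theorem neg_le_mul_of_neg_le {R : Type*} [Ring R] [LinearOrder R] [IsOrderedRing R] {a c x : R}
    (ha₀ : 0 ≤ a) (ha₁ : a ≤ 1) (hc : 0 ≤ c) (h : -c ≤ x) : -c ≤ a * x :=
  calc -c ≤ -(a * c) := neg_le_neg (mul_le_of_le_one_left hc ha₁)
    _ = a * -c := (mul_neg a c).symm
    _ ≤ a * x := mul_le_mul_of_nonneg_left h ha₀

section SubsidyGain

variable (k : ℕ) (E α β δ₁ δ₂ : ℝ)

noncomputable def subsidyGain (τ b : ℕ) : ℝ := V k E α β δ₂ τ b - V k E α β δ₁ τ b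

theorem subsidyGain_zero (b : ℕ) : subsidyGain k E α β δ₁ δ₂ 0 b = 0 := by
  simp [subsidyGain, V]

theorem subsidyGain_succ_mem_uIcc (τ b : ℕ) :
    subsidyGain k E α β δ₁ δ₂ (τ + 1) b ∈
      Set.uIcc (δ₂ - δ₁ + β * subsidyGain k E α β δ₁ δ₂ τ (b - 1))
        (β * subsidyGain k E α β δ₁ δ₂ τ (b - k)) := by
  rcases τ with _ | t
  · rcases b with _ | b
    · simpa [subsidyGain_zero, subsidyGain, V] using max_sub_max_mem_uIcc δ₂ 0 δ₁ 0
    · simpa [subsidyGain_zero, subsidyGain, V] using max_sub_max_mem_uIcc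
        (δ₂ - F α b) (E - F α (b + 1 - k)) (δ₁ - F α b) (E - F α (b + 1 - k))
  · convert max_sub_max_mem_uIcc
      (δ₂ + β * V k E α β δ₂ (t + 1) (b - 1))
      ((if 1 ≤ b then E else 0) + β * V k E α β δ₂ (t + 1) (b - k))
      (δ₁ + β * V k E α β δ₁ (t + 1) (b - 1))
      ((if 1 ≤ b then E else 0) + β * V k E α β δ₁ (t + 1) (b - k))
      using 1
    · unfold subsidyGain
      congr 1 <;> ring
    · rfl

theorem neg_le_subsidyGain_sub (hβ0 : 0 ≤ β) (hβ1 : β ≤ 1) (hδ : δ₁ ≤ δ₂) (hk : 1 ≤ k) (τ : ℕ)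
    {b b' : ℕ} (hbb' : b ≤ b') (hb' : b' - k = b - 1) :
    -(δ₂ - δ₁) ≤ subsidyGain k E α β δ₁ δ₂ τ b' - subsidyGain k E α β δ₁ δ₂ τ b := by
  have hΔ : 0 ≤ δ₂ - δ₁ := sub_nonneg.mpr hδ
  induction τ generalizing b b' with
  | zero => simp [subsidyGain_zero, hδ]
  | succ τ ih =>
    have mem_b := subsidyGain_succ_mem_uIcc k E α β δ₁ δ₂ τ b
    have mem_b' := subsidyGain_succ_mem_uIcc k E α β δ₁ δ₂ τ b'
    rw [hb'] at mem_b'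
    set W := subsidyGain k E α β δ₁ δ₂ τ
    have passive : -(δ₂ - δ₁) ≤ β * (W (b' - 1) - W (b - 1)) :=
      neg_le_mul_of_neg_le hβ0 hβ1 hΔ (ih (by omega) (by omega))
    have active : -(δ₂ - δ₁) ≤ β * (W (b - 1) - W (b - k)) :=
      neg_le_mul_of_neg_le hβ0 hβ1 hΔ (ih (by omega) (by omega))
    refine le_sub_of_mem_uIcc mem_b' mem_b ?_ ?_ ?_ ?_ <;> linarith

end SubsidyGain

theorem h_slope_ge_neg_one_general (k : ℕ) (hk : 1 ≤ k) (E α β : ℝ)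
    (hβ0 : 0 < β) (hβ1 : β < 1)
    (τ b : ℕ) (δ₁ δ₂ : ℝ) (hδ : δ₁ ≤ δ₂) :
    (V k E α β δ₂ τ (b + k - 1) - V k E α β δ₂ τ b)
      - (V k E α β δ₁ τ (b + k - 1) - V k E α β δ₁ τ b) ≥ -(δ₂ - δ₁) := by
  have h := neg_le_subsidyGain_sub k E α β δ₁ δ₂ hβ0.le hβ1.le hδ hk τ
    (b := b) (b' := b + k - 1) (by omega) (by omega)
  unfold subsidyGain at h
  linarith

theorem h_slope_ge_neg_one (k : ℕ) (hk : 1 ≤ k) (E α β : ℝ) (hE : 0 ≤ E) (hα : 0 < α)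
    (hβ0 : 0 < β) (hβ1 : β < 1)
    (τ b : ℕ) (hτ : 1 ≤ τ) (δ₁ δ₂ : ℝ) (hδ : δ₁ ≤ δ₂) :
    (V k E α β δ₂ τ (b + k - 1) - V k E α β δ₂ τ b)
      - (V k E α β δ₁ τ (b + k - 1) - V k E α β δ₁ τ b) ≥ -(δ₂ - δ₁) :=
  h_slope_ge_neg_one_general k hk E α β hβ0 hβ1 τ b δ₁ δ₂ hδ
end

section
/- Whittle index of just-finishable urgent states (Theorem 2, third case): for every integer τ ≥ 1 and every integer b with k·τ − k + 2 ≤ b ≤ k·τ (the task can be finished only by offloading in every remaining slot), the Whittle index is ω(τ,b) = E + β^{τ−1}·α·(b − k·τ + k − 1)². -/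
/-!
Write `τ = s + 1` and `b = k * s + 1 + c` with `c < k`. For `δ ≥ E`, from any state `(s + 1, b)`
with `b > k * s` some optimal policy takes all its passive slots first (moving a passive slot to
the front only moves the larger reward `δ` to a less discounted slot), so `V` is the best of the
explicit values of the policies "passive for `j` slots, then offload". Comparing these values at
`b - 1` and at `b - k`, the passive action always leaves at least `c` more subtasks at the
deadline, whence
`g_δ(τ, b) ≤ δ - E - β ^ s * F α c`; at `δ = E + β ^ s * F α c` offloading throughout is optimal
from `b - k`, which gives equality. For `δ < E` the gap is negative because `V` is antitone in `b`.
-/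

open Finset

lemma F_nonneg {α : ℝ} (hα : 0 ≤ α) (n : ℕ) : 0 ≤ F α n := by
  unfold F; positivity

lemma F_mono {α : ℝ} (hα : 0 ≤ α) : Monotone (F α) := fun _ _ h =>
  mul_le_mul_of_nonneg_left (pow_le_pow_left₀ (Nat.cast_nonneg _) (Nat.cast_le.mpr h) 2) hα

lemma F_add_F_le {α : ℝ} (hα : 0 ≤ α) (m n : ℕ) : F α m + F α n ≤ F α (m + n) := by
  unfold F
  push_cast
  nlinarith [mul_nonneg (mul_nonneg hα (Nat.cast_nonneg m)) (Nat.cast_nonneg (α := ℝ) n)]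

lemma mul_geom_sum_le {β : ℝ} (hβ0 : 0 ≤ β) (hβ1 : β ≤ 1) (j : ℕ) :
    β * ∑ i ∈ range j, β ^ i ≤ j :=
  calc β * ∑ i ∈ range j, β ^ i = ∑ i ∈ range j, β ^ (i + 1) := by
        rw [mul_sum]; simp only [pow_succ, mul_comm]
    _ ≤ ∑ _i ∈ range j, (1 : ℝ) := sum_le_sum fun i _ => pow_le_one₀ hβ0 hβ1
    _ = j := by simp

section ValueFunction

variable (k : ℕ) (E α β δ : ℝ)

lemma V_one_add_one (b : ℕ) :
    V k E α β δ 1 (b + 1) = max (δ - F α b) (E - F α (b + 1 - k)) := rfl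

lemma V_add_two_of_pos (t : ℕ) {b : ℕ} (hb : 0 < b) :
    V k E α β δ (t + 2) b = max (δ + β * V k E α β δ (t + 1) (b - 1))
      (E + β * V k E α β δ (t + 1) (b - k)) := by
  rw [V, if_pos (show 1 ≤ b from hb)]

lemma g_one_add_one (b : ℕ) : g k E α β δ 1 (b + 1) = δ - F α b - E + F α (b + 1 - k) := rfl

lemma g_add_two_of_pos (t : ℕ) {b : ℕ} (hb : 0 < b) :
    g k E α β δ (t + 2) b =
      δ - E + β * (V k E α β δ (t + 1) (b - 1) - V k E α β δ (t + 1) (b - k)) := by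
  rw [g, if_pos (show 1 ≤ b from hb)]; ring

/-- Value, from `s + 1` slots and `b` subtasks, of staying passive for the first `j` slots and
offloading in all later ones; `b - j - k * (s + 1 - j)` subtasks are left at the deadline. -/
noncomputable def passiveFirstValue (s b j : ℕ) : ℝ :=
  E * ∑ i ∈ range (s + 1), β ^ i + (δ - E) * ∑ i ∈ range j, β ^ i
    - β ^ s * F α (b - j - k * (s + 1 - j))

lemma passiveFirstValue_zero_zero (b : ℕ) :
    passiveFirstValue k E α β δ 0 b 0 = E - F α (b - k) := by
  simp [passiveFirstValue]

lemma passiveFirstValue_zero_one (b : ℕ) :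
    passiveFirstValue k E α β δ 0 (b + 1) 1 = δ - F α b := by
  simp [passiveFirstValue]

lemma passiveFirstValue_succ_zero (s b : ℕ) :
    passiveFirstValue k E α β δ (s + 1) b 0 =
      E + β * passiveFirstValue k E α β δ s (b - k) 0 := by
  have hleft : b - 0 - k * (s + 1 + 1 - 0) = b - k - 0 - k * (s + 1 - 0) := by
    simp only [Nat.sub_zero, mul_add, mul_one]; omega
  simp only [passiveFirstValue, hleft, geom_sum_succ (n := s + 1), sum_range_zero, pow_succ]
  ring

lemma passiveFirstValue_succ_succ (s b j : ℕ) :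
    passiveFirstValue k E α β δ (s + 1) b (j + 1) =
      δ + β * passiveFirstValue k E α β δ s (b - 1) j := by
  have hleft : b - (j + 1) - k * (s + 1 + 1 - (j + 1)) = b - 1 - j - k * (s + 1 - j) := by
    rw [show s + 1 + 1 - (j + 1) = s + 1 - j by omega]; omega
  simp only [passiveFirstValue, hleft, geom_sum_succ (n := s + 1), geom_sum_succ (n := j),
    pow_succ]
  ring

/-- When `E ≤ δ`, moving an offloading slot from the front to after the passive ones does not
lower the value. -/
lemma add_mul_passiveFirstValue_le (hδ : E ≤ δ) (hβ0 : 0 ≤ β) (hβ1 : β ≤ 1) {s j : ℕ}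
    (hj : j ≤ s + 1) (b : ℕ) :
    E + β * passiveFirstValue k E α β δ s (b - k) j ≤
      passiveFirstValue k E α β δ (s + 1) b j := by
  have hleft : b - k - j - k * (s + 1 - j) = b - j - k * (s + 1 + 1 - j) := by
    rw [show s + 1 + 1 - j = (s + 1 - j) + 1 by omega, mul_add_one]; omega
  have hsum : β * ∑ i ∈ range j, β ^ i ≤ ∑ i ∈ range j, β ^ i :=
    mul_le_of_le_one_left (sum_nonneg fun i _ => pow_nonneg hβ0 i) hβ1
  have := mul_le_mul_of_nonneg_left hsum (sub_nonneg.mpr hδ)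
  simp only [passiveFirstValue, hleft, geom_sum_succ (n := s + 1), pow_succ]
  nlinarith

lemma passiveFirstValue_le_V (hk : 1 ≤ k) (hβ : 0 ≤ β) (s : ℕ) :
    ∀ b j, k * s < b → j ≤ s + 1 →
      passiveFirstValue k E α β δ s b j ≤ V k E α β δ (s + 1) b := by
  induction s with
  | zero =>
    intro b j hb hj
    obtain ⟨b, rfl⟩ : ∃ b', b = b' + 1 := ⟨b - 1, by omega⟩
    rw [V_one_add_one]
    interval_cases j
    · exact (passiveFirstValue_zero_zero k E α β δ (b + 1)).trans_le (le_max_right _ _)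
    · exact (passiveFirstValue_zero_one k E α β δ b).trans_le (le_max_left _ _)
  | succ s ih =>
    intro b j hb hj
    have hks : k * (s + 1) = k * s + k := Nat.mul_succ k s
    rw [V_add_two_of_pos k E α β δ s (by omega)]
    cases j with
    | zero =>
      rw [passiveFirstValue_succ_zero]
      exact le_max_of_le_right <| add_le_add_right
        (mul_le_mul_of_nonneg_left (ih (b - k) 0 (by omega) (by omega)) hβ) E
    | succ j =>
      rw [passiveFirstValue_succ_succ]
      exact le_max_of_le_left <| add_le_add_right
        (mul_le_mul_of_nonneg_left (ih (b - 1) j (by omega) (by omega)) hβ) δ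

lemma exists_V_le_passiveFirstValue (hk : 1 ≤ k) (hδ : E ≤ δ) (hβ0 : 0 ≤ β) (hβ1 : β ≤ 1)
    (s : ℕ) : ∀ b, k * s < b →
      ∃ j ≤ s + 1, V k E α β δ (s + 1) b ≤ passiveFirstValue k E α β δ s b j := by
  induction s with
  | zero =>
    intro b hb
    obtain ⟨b, rfl⟩ : ∃ b', b = b' + 1 := ⟨b - 1, by omega⟩
    rw [V_one_add_one]
    rcases le_total (δ - F α b) (E - F α (b + 1 - k)) with h | h
    · exact ⟨0, by omega,
        (max_le h le_rfl).trans_eq (passiveFirstValue_zero_zero k E α β δ (b + 1)).symm⟩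
    · exact ⟨1, le_rfl,
        (max_le le_rfl h).trans_eq (passiveFirstValue_zero_one k E α β δ b).symm⟩
  | succ s ih =>
    intro b hb
    have hks : k * (s + 1) = k * s + k := Nat.mul_succ k s
    obtain ⟨jP, hjP, hP⟩ := ih (b - 1) (by omega)
    obtain ⟨jA, hjA, hA⟩ := ih (b - k) (by omega)
    have hPj : δ + β * V k E α β δ (s + 1) (b - 1) ≤
        passiveFirstValue k E α β δ (s + 1) b (jP + 1) := by
      rw [passiveFirstValue_succ_succ]
      exact add_le_add_right (mul_le_mul_of_nonneg_left hP hβ0) δ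
    have hAj : E + β * V k E α β δ (s + 1) (b - k) ≤
        passiveFirstValue k E α β δ (s + 1) b jA :=
      (add_le_add_right (mul_le_mul_of_nonneg_left hA hβ0) E).trans
        (add_mul_passiveFirstValue_le k E α β δ hδ hβ0 hβ1 hjA b)
    rw [V_add_two_of_pos k E α β δ s (by omega)]
    rcases le_total (passiveFirstValue k E α β δ (s + 1) b (jP + 1))
      (passiveFirstValue k E α β δ (s + 1) b jA) with h | h
    · exact ⟨jA, by omega, max_le (hPj.trans h) hAj⟩
    · exact ⟨jP + 1, by omega, max_le hPj (hAj.trans h)⟩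

lemma V_le_V_of_le (hk : 1 ≤ k) (hα : 0 ≤ α) (hβ : 0 ≤ β) (s : ℕ) :
    ∀ x y, k * s < x → x ≤ y → V k E α β δ (s + 1) y ≤ V k E α β δ (s + 1) x := by
  induction s with
  | zero =>
    intro x y hx hxy
    obtain ⟨x, rfl⟩ : ∃ x', x = x' + 1 := ⟨x - 1, by omega⟩
    obtain ⟨y, rfl⟩ : ∃ y', y = y' + 1 := ⟨y - 1, by omega⟩
    rw [V_one_add_one, V_one_add_one]
    exact max_le_max (sub_le_sub_left (F_mono hα (by omega)) δ)
      (sub_le_sub_left (F_mono hα (by omega)) E)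
  | succ s ih =>
    intro x y hx hxy
    have hks : k * (s + 1) = k * s + k := Nat.mul_succ k s
    rw [V_add_two_of_pos k E α β δ s (by omega), V_add_two_of_pos k E α β δ s (by omega)]
    have hP := ih (x - 1) (y - 1) (by omega) (by omega)
    have hA := ih (x - k) (y - k) (by omega) (by omega)
    exact max_le_max (add_le_add_right (mul_le_mul_of_nonneg_left hP hβ) δ)
      (add_le_add_right (mul_le_mul_of_nonneg_left hA hβ) E)

end ValueFunction

section Urgent

variable (k : ℕ) (E α β : ℝ)

lemma mul_le_sub_sub_mul_sub {c s j : ℕ} (hck : c < k) (hj : j ≤ s + 1) :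
    c * j ≤ k * s + 1 + c - j - k * (s + 1 - j) := by
  rcases j with _ | i
  · simp
  obtain ⟨m, rfl⟩ : ∃ m, s = i + m := ⟨s - i, by omega⟩
  have hci : c * i + i ≤ k * i := by simpa [add_mul] using Nat.mul_le_mul_right i hck
  rw [show i + m + 1 - (i + 1) = m by omega, Nat.mul_succ, mul_add k i m]
  omega

lemma V_urgent_le_geom_sum (hk : 1 ≤ k) (hα : 0 ≤ α) (hβ0 : 0 ≤ β) (hβ1 : β ≤ 1) (s : ℕ) {c : ℕ}
    (hck : c < k) :
    V k E α β (E + β ^ (s + 1) * F α c) (s + 1) (k * s + 1 + c) ≤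
      E * ∑ i ∈ range (s + 1), β ^ i := by
  set δ := E + β ^ (s + 1) * F α c
  obtain ⟨j, hj, hV⟩ := exists_V_le_passiveFirstValue k E α β δ hk
    (le_add_of_nonneg_right (by positivity [F_nonneg hα c])) hβ0 hβ1 s (k * s + 1 + c)
    (by omega)
  have hcj : (c : ℝ) * j ≤ (k * s + 1 + c - j - k * (s + 1 - j) : ℕ) := by
    exact_mod_cast mul_le_sub_sub_mul_sub k hck hj
  have hβj := mul_geom_sum_le hβ0 hβ1 j
  -- each passive slot earns at most `β ^ (s + 1) * F α c`, but adds `k - 1 ≥ c` to the leftover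
  have hpen : β ^ (s + 1) * F α c * ∑ i ∈ range j, β ^ i ≤
      β ^ s * F α (k * s + 1 + c - j - k * (s + 1 - j)) := by
    have hjj : (j : ℝ) ≤ (j : ℝ) ^ 2 := by exact_mod_cast Nat.le_self_pow two_ne_zero j
    unfold F
    calc β ^ (s + 1) * (α * (c : ℝ) ^ 2) * ∑ i ∈ range j, β ^ i
        = β ^ s * α * (c : ℝ) ^ 2 * (β * ∑ i ∈ range j, β ^ i) := by ring
      _ ≤ β ^ s * α * (c : ℝ) ^ 2 * (j : ℝ) ^ 2 := by gcongr; exact hβj.trans hjj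
      _ = β ^ s * α * ((c : ℝ) * j) ^ 2 := by ring
      _ ≤ _ := by rw [← mul_assoc]; gcongr
  refine hV.trans ?_
  simp only [passiveFirstValue, δ, add_sub_cancel_left]
  linarith

lemma sub_sub_mul_sub_add_le (hk : 1 ≤ k) {c s j : ℕ} (hck : c < k) (hj : j ≤ s + 1) :
    k * s + 1 + c - j - k * (s + 1 - j) + c ≤ k * (s + 1) + c - j - k * (s + 1 - j) := by
  have hsplit : k * (s + 1 - j) + k * j = k * (s + 1) := by
    rw [← mul_add, Nat.sub_add_cancel hj]
  have hjk : j ≤ k * j := Nat.le_mul_of_pos_left j hk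
  have hks : k * (s + 1) = k * s + k := Nat.mul_succ k s
  omega

lemma V_add_le_V_urgent (hk : 1 ≤ k) (hα : 0 ≤ α) (hβ0 : 0 ≤ β) (hβ1 : β ≤ 1) {δ : ℝ}
    (hδ : E ≤ δ) (s : ℕ) {c : ℕ} (hck : c < k) :
    V k E α β δ (s + 1) (k * (s + 1) + c) + β ^ s * F α c ≤
      V k E α β δ (s + 1) (k * s + 1 + c) := by
  have hks : k * (s + 1) = k * s + k := Nat.mul_succ k s
  obtain ⟨j, hj, hV⟩ := exists_V_le_passiveFirstValue k E α β δ hk hδ hβ0 hβ1 s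
    (k * (s + 1) + c) (by omega)
  have hW := passiveFirstValue_le_V k E α β δ hk hβ0 s (k * s + 1 + c) j (by omega) hj
  have hF := (F_add_F_le hα _ c).trans (F_mono hα (sub_sub_mul_sub_add_le k hk hck hj))
  have := mul_le_mul_of_nonneg_left hF (pow_nonneg hβ0 s)
  simp only [passiveFirstValue] at hV hW
  linarith

lemma isLeast_g_nonneg_urgent (hk : 1 ≤ k) (hα : 0 ≤ α) (hβ0 : 0 ≤ β) (hβ1 : β ≤ 1) (s c : ℕ)
    (hck : c < k) :
    IsLeast {δ | 0 ≤ g k E α β δ (s + 1) (k * s + 1 + c)} (E + β ^ s * F α c) := by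
  rcases s with _ | s
  · have hg : ∀ δ, g k E α β δ 1 (c + 1) = δ - (E + F α c) := by
      intro δ
      rw [g_one_add_one, Nat.sub_eq_zero_of_le hck]
      simp only [F, Nat.cast_zero]
      ring
    have hset : {δ | 0 ≤ g k E α β δ 1 (c + 1)} = Set.Ici (E + F α c) := by
      ext δ; simp [hg]
    rw [show k * 0 + 1 + c = c + 1 by omega, hset, pow_zero, one_mul]
    exact isLeast_Ici
  have hks : k * (s + 1) = k * s + k := Nat.mul_succ k s
  have hg : ∀ δ, g k E α β δ (s + 1 + 1) (k * (s + 1) + 1 + c) = δ - E +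
      β * (V k E α β δ (s + 1) (k * (s + 1) + c) - V k E α β δ (s + 1) (k * s + 1 + c)) := by
    intro δ
    rw [g_add_two_of_pos k E α β δ s (by omega),
      show k * (s + 1) + 1 + c - 1 = k * (s + 1) + c by omega,
      show k * (s + 1) + 1 + c - k = k * s + 1 + c by omega]
  refine ⟨?_, fun δ hδ => ?_⟩
  · have hlow := passiveFirstValue_le_V k E α β (E + β ^ (s + 1) * F α c) hk hβ0 s
      (k * (s + 1) + c) 0 (by omega) (by omega)
    simp only [passiveFirstValue, Nat.sub_zero, Nat.add_sub_cancel_left, range_zero, sum_empty,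
      mul_zero, add_zero] at hlow
    have hup := V_urgent_le_geom_sum k E α β hk hα hβ0 hβ1 s hck
    have hpow : β ^ (s + 1) * F α c = β * (β ^ s * F α c) := by ring
    show 0 ≤ g k E α β _ (s + 1 + 1) (k * (s + 1) + 1 + c)
    rw [hg]
    nlinarith [mul_le_mul_of_nonneg_left hlow hβ0, mul_le_mul_of_nonneg_left hup hβ0]
  · by_contra! hlt
    replace hδ : 0 ≤ g k E α β δ (s + 1 + 1) (k * (s + 1) + 1 + c) := hδ
    rw [hg] at hδ
    rcases le_or_gt E δ with hEδ | hδE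
    · have := mul_le_mul_of_nonneg_left
        (V_add_le_V_urgent k E α β hk hα hβ0 hβ1 hEδ s hck) hβ0
      rw [pow_succ] at hlt
      linarith
    · have hV := V_le_V_of_le k E α β δ hk hα hβ0 s (k * s + 1 + c) (k * (s + 1) + c)
        (by omega) (by omega)
      have := mul_le_mul_of_nonneg_left hV hβ0
      linarith

end Urgent

theorem whittle_urgent_general (k : ℕ) (hk : 1 ≤ k) (E α β : ℝ) (hα : 0 < α)
    (hβ0 : 0 < β) (hβ1 : β < 1)
    (τ b : ℕ) (hτ : 1 ≤ τ) (hb1 : k * τ - k + 2 ≤ b) (hb2 : b ≤ k * τ) :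
    whittle k E α β τ b = E + β ^ (τ - 1) * α * ((b : ℝ) - k * τ + k - 1) ^ 2 := by
  obtain ⟨s, rfl⟩ : ∃ s, τ = s + 1 := ⟨τ - 1, by omega⟩
  have hks : k * (s + 1) = k * s + k := Nat.mul_succ k s
  obtain ⟨c, rfl⟩ : ∃ c, b = k * s + 1 + c := ⟨b - (k * s + 1), by omega⟩
  have hc : ((k * s + 1 + c : ℕ) : ℝ) - k * ((s + 1 : ℕ) : ℝ) + k - 1 = c := by
    push_cast; ring
  rw [whittle, (isLeast_g_nonneg_urgent k E α β hk hα.le hβ0.le hβ1.le s c (by omega)).csInf_eq,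
    Nat.add_sub_cancel, hc, F, mul_assoc]

theorem whittle_urgent (k : ℕ) (hk : 1 ≤ k) (E α β : ℝ) (hE : 0 ≤ E) (hα : 0 < α)
    (hβ0 : 0 < β) (hβ1 : β < 1)
    (τ b : ℕ) (hτ : 1 ≤ τ) (hb1 : k * τ - k + 2 ≤ b) (hb2 : b ≤ k * τ) :
    whittle k E α β τ b = E + β ^ (τ - 1) * α * ((b : ℝ) - k * τ + k - 1) ^ 2 :=
  whittle_urgent_general k hk E α β hα hβ0 hβ1 τ b hτ hb1 hb2
end
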